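/- arXiv:2004.05028 — 4 statements merged into one kernel-verified Lean document; each statement's English description precedes it below -/
import Mathlib

section
/- Any square-integrable function g on the unit hypercube [0,1]^n (n ≥ 2) satisfies ∫ g(ξ)² dξ ≥ Σ_{i=1}^n ∫ g_i(ξ_i)² dξ_i − (n−1)(∫ g(ξ) dξ)², where g_i denotes the i-th marginal of g. -/
open MeasureTheory
open scoped ENNReal

/-- Lebesgue measure restricted to the unit interval. -/
noncomputable def lineMeasure : Measure ℝ := volume.restrict (Set.Icc (0:ℝ) 1)

/-- The (product) Lebesgue measure on the unit hypercube `[0,1]^n`. -/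
noncomputable def cubeMeasure (n : ℕ) : Measure (Fin n → ℝ) :=
  Measure.pi fun _ => lineMeasure

/-- The `i`-th marginal of `g`: the integral of `g` over all coordinates except the `i`-th
(since `cubeMeasure n` is a product of probability measures, integrating the updated function
over the full cube agrees with integrating over `ξ_i^c`). -/
noncomputable def marginal {n : ℕ} (g : (Fin n → ℝ) → ℝ) (i : Fin n) (x : ℝ) : ℝ :=
  ∫ ξ, g (Function.update ξ i x) ∂(cubeMeasure n)

instance : IsProbabilityMeasure lineMeasure :=
  ⟨by simp [lineMeasure, Real.volume_Icc]⟩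

instance (n : ℕ) : IsProbabilityMeasure (cubeMeasure n) := by
  unfold cubeMeasure; infer_instance

lemma measurable_T {n : ℕ} (i : Fin n) :
    Measurable (fun p : ℝ × (Fin n → ℝ) => Function.update p.2 i p.1) := by
  apply measurable_pi_lambda
  intro j
  by_cases h : j = i
  · subst h; simpa using measurable_fst
  · simp only [Function.update_apply, if_neg h]
    exact (measurable_pi_apply j).comp measurable_snd

lemma mp_update {n : ℕ} (i : Fin n) :
    MeasurePreserving (fun p : ℝ × (Fin n → ℝ) => Function.update p.2 i p.1)
      (lineMeasure.prod (cubeMeasure n)) (cubeMeasure n) := by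
  refine ⟨measurable_T i, ?_⟩
  rw [cubeMeasure]
  symm; apply Measure.pi_eq
  intro s hs
  rw [Measure.map_apply (measurable_T i) (MeasurableSet.univ_pi hs)]
  have hpre : (fun p : ℝ × (Fin n → ℝ) => Function.update p.2 i p.1) ⁻¹' (Set.pi Set.univ s)
      = (s i) ×ˢ (Set.pi Set.univ (Function.update s i Set.univ)) := by
    ext ⟨x, ξ⟩
    simp only [Set.mem_preimage, Set.mem_pi, Set.mem_univ, forall_true_left, Set.mem_prod]
    constructor
    · intro h
      refine ⟨by simpa using h i, fun j => ?_⟩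
      by_cases hj : j = i
      · subst hj; simp
      · simpa [Function.update_of_ne hj] using h j
    · rintro ⟨h1, h2⟩ j
      by_cases hj : j = i
      · subst hj; simpa using h1
      · have := h2 j
        simpa [Function.update_of_ne hj] using this
  rw [hpre, Measure.prod_prod, Measure.pi_pi]
  have hterm : ∀ j, lineMeasure (Function.update s i Set.univ j)
      = Function.update (fun j => lineMeasure (s j)) i 1 j := by
    intro j
    by_cases hj : j = i
    · subst hj; simp
    · simp [Function.update_of_ne hj]
  rw [Finset.prod_congr rfl (fun j _ => hterm j),
    Finset.prod_update_of_mem (Finset.mem_univ i),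
    ← Finset.mul_prod_erase Finset.univ _ (Finset.mem_univ i)]
  rw [Finset.sdiff_singleton_eq_erase, one_mul]

lemma mp_eval {n : ℕ} (i : Fin n) :
    MeasurePreserving (fun ξ : Fin n → ℝ => ξ i) (cubeMeasure n) lineMeasure := by
  refine ⟨measurable_pi_apply i, ?_⟩
  rw [← (mp_update i).map_eq, Measure.map_map (measurable_pi_apply i) (measurable_T i)]
  have : ((fun ξ : Fin n → ℝ => ξ i) ∘ fun p : ℝ × (Fin n → ℝ) => Function.update p.2 i p.1)
      = Prod.fst := by
    ext p; simp
  rw [this, Measure.map_fst_prod]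
  simp

lemma mul_mem_L1 {α : Type*} [MeasurableSpace α] {μ : Measure α} {f h : α → ℝ}
    (hf : MemLp f 2 μ) (hh : MemLp h 2 μ) :
    Integrable (fun x => f x * h x) μ := by
  have h12 : (1 : ℝ≥0∞) / 2 + 1 / 2 = 1 := by
    rw [one_div, ENNReal.inv_two_add_inv_two]
  have hcond : (1 : ℝ≥0∞) / 1 = 1 / 2 + 1 / 2 := by
    rw [h12]; simp
  exact memLp_one_iff_integrable.mp
    (hh.smul hf (hpqr := ⟨by rw [inv_one, ENNReal.inv_two_add_inv_two]⟩) (r := 1))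

lemma integral_comp_eval {n : ℕ} (i : Fin n) {φ : ℝ → ℝ}
    (hφ : AEStronglyMeasurable φ lineMeasure) :
    ∫ ξ, φ (ξ i) ∂(cubeMeasure n) = ∫ x, φ x ∂lineMeasure := by
  have h := integral_map (μ := cubeMeasure n) (φ := fun ξ : Fin n → ℝ => ξ i) (f := φ)
    (measurable_pi_apply i).aemeasurable (by rwa [(mp_eval i).map_eq])
  rw [(mp_eval i).map_eq] at h
  exact h.symm

lemma integral_mul_comp_eval {n : ℕ} (i : Fin n) {f : (Fin n → ℝ) → ℝ} {F : ℝ → ℝ}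
    (hf : MemLp f 2 (cubeMeasure n)) (hF : MemLp F 2 lineMeasure) :
    ∫ ξ, f ξ * F (ξ i) ∂(cubeMeasure n) = ∫ x, marginal f i x * F x ∂lineMeasure := by
  have hT := mp_update i
  have hmpfst : MeasurePreserving (Prod.fst : ℝ × (Fin n → ℝ) → ℝ)
      (lineMeasure.prod (cubeMeasure n)) lineMeasure :=
    ⟨measurable_fst, by rw [Measure.map_fst_prod]; simp⟩
  have hfT : MemLp (fun p : ℝ × (Fin n → ℝ) => f (Function.update p.2 i p.1)) 2
      (lineMeasure.prod (cubeMeasure n)) := hf.comp_measurePreserving hT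
  have hFfst : MemLp (fun p : ℝ × (Fin n → ℝ) => F p.1) 2
      (lineMeasure.prod (cubeMeasure n)) := hF.comp_measurePreserving hmpfst
  have hint : Integrable (fun p : ℝ × (Fin n → ℝ) => f (Function.update p.2 i p.1) * F p.1)
      (lineMeasure.prod (cubeMeasure n)) := mul_mem_L1 hfT hFfst
  have haesm : AEStronglyMeasurable (fun ξ : Fin n → ℝ => f ξ * F (ξ i)) (cubeMeasure n) :=
    hf.1.mul (hF.comp_measurePreserving (mp_eval i)).1
  have hm : AEStronglyMeasurable (fun ξ : Fin n → ℝ => f ξ * F (ξ i))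
      (Measure.map (fun p : ℝ × (Fin n → ℝ) => Function.update p.2 i p.1)
        (lineMeasure.prod (cubeMeasure n))) := by rwa [hT.map_eq]
  have step1 := integral_map (φ := fun p : ℝ × (Fin n → ℝ) => Function.update p.2 i p.1)
    hT.measurable.aemeasurable hm
  rw [hT.map_eq] at step1
  simp only [Function.update_self] at step1
  rw [step1, integral_prod _ hint]
  refine integral_congr_ae (Filter.Eventually.of_forall fun x => ?_)
  show (∫ ξ, f (Function.update ξ i x) * F x ∂(cubeMeasure n)) = marginal f i x * F x
  rw [integral_mul_const]
  rfl

lemma sq_integral_le {α : Type*} [MeasurableSpace α] {μ : Measure α} [IsProbabilityMeasure μ]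
    {f : α → ℝ} (h1 : Integrable f μ) (h2 : Integrable (fun x => f x ^ 2) μ) :
    (∫ x, f x ∂μ) ^ 2 ≤ ∫ x, f x ^ 2 ∂μ := by
  set c := ∫ x, f x ∂μ with hc
  have h : 0 ≤ ∫ x, (f x - c) ^ 2 ∂μ := integral_nonneg fun x => sq_nonneg _
  have expand : ∫ x, (f x - c) ^ 2 ∂μ = ∫ x, f x ^ 2 ∂μ - c ^ 2 := by
    have heq : (fun x => (f x - c) ^ 2) = fun x => (f x ^ 2 - (2 * c) * f x) + c ^ 2 := by
      funext x; ring
    have ha : Integrable (fun x => f x ^ 2 - 2 * c * f x) μ := h2.sub (h1.const_mul _)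
    have hb : Integrable (fun x => 2 * c * f x) μ := h1.const_mul _
    rw [heq, integral_add ha (integrable_const _),
      integral_sub h2 hb, integral_const_mul, integral_const]
    simp only [probReal_univ, ENNReal.toReal_one, smul_eq_mul, one_mul]
    rw [← hc]; ring
  linarith

lemma memℒp_marginal {n : ℕ} (i : Fin n) {g : (Fin n → ℝ) → ℝ}
    (hg : MemLp g 2 (cubeMeasure n)) : MemLp (marginal g i) 2 lineMeasure := by
  have hT := mp_update i
  have h2 : MemLp (fun p : ℝ × (Fin n → ℝ) => g (Function.update p.2 i p.1)) 2
      (lineMeasure.prod (cubeMeasure n)) := hg.comp_measurePreserving hT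
  set G := hg.1.mk g with hGdef
  have hGsm : StronglyMeasurable G := hg.1.stronglyMeasurable_mk
  have hGg : g =ᵐ[cubeMeasure n] G := hg.1.ae_eq_mk
  have hGT : (fun p : ℝ × (Fin n → ℝ) => g (Function.update p.2 i p.1))
      =ᵐ[lineMeasure.prod (cubeMeasure n)] fun p => G (Function.update p.2 i p.1) := by
    exact MeasureTheory.ae_eq_comp hT.measurable.aemeasurable (by rwa [hT.map_eq])
  have hae : ∀ᵐ x ∂lineMeasure, ∀ᵐ ξ ∂(cubeMeasure n),
      g (Function.update ξ i x) = G (Function.update ξ i x) :=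
    Measure.ae_ae_of_ae_prod hGT
  have haemarg : marginal g i =ᵐ[lineMeasure]
      fun x => ∫ ξ, G (Function.update ξ i x) ∂(cubeMeasure n) := by
    filter_upwards [hae] with x hx
    exact integral_congr_ae hx
  have hsmmarg : StronglyMeasurable fun x => ∫ ξ, G (Function.update ξ i x) ∂(cubeMeasure n) :=
    (hGsm.comp_measurable (measurable_T i)).integral_prod_right'
  have haesm : AEStronglyMeasurable (marginal g i) lineMeasure :=
    hsmmarg.aestronglyMeasurable.congr haemarg.symm
  have hsq : Integrable (fun p : ℝ × (Fin n → ℝ) => (g (Function.update p.2 i p.1)) ^ 2)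
      (lineMeasure.prod (cubeMeasure n)) := h2.integrable_sq
  have hInner : Integrable (fun x => ∫ ξ, (g (Function.update ξ i x)) ^ 2 ∂(cubeMeasure n))
      lineMeasure := hsq.integral_prod_left
  have h1ae : ∀ᵐ x ∂lineMeasure, Integrable (fun ξ => g (Function.update ξ i x))
      (cubeMeasure n) := (h2.integrable one_le_two).prod_right_ae
  have h2ae : ∀ᵐ x ∂lineMeasure, Integrable (fun ξ => (g (Function.update ξ i x)) ^ 2)
      (cubeMeasure n) := hsq.prod_right_ae
  have hbound : ∀ᵐ x ∂lineMeasure,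
      ‖(marginal g i x) ^ 2‖ ≤ ∫ ξ, (g (Function.update ξ i x)) ^ 2 ∂(cubeMeasure n) := by
    filter_upwards [h1ae, h2ae] with x h1x h2x
    have hcs := sq_integral_le h1x h2x
    have hn : ‖(marginal g i x) ^ 2‖ = (marginal g i x) ^ 2 := by
      rw [Real.norm_eq_abs, abs_of_nonneg (sq_nonneg _)]
    rw [hn]
    exact hcs
  have hint : Integrable (fun x => (marginal g i x) ^ 2) lineMeasure :=
    hInner.mono' (haesm.pow 2) hbound
  exact (memLp_two_iff_integrable_sq haesm).2 hint

theorem stmt0 (n : ℕ) (hn : 2 ≤ n) (g : (Fin n → ℝ) → ℝ)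
    (hg : MemLp g 2 (cubeMeasure n)) :
    ∫ ξ, (g ξ)^2 ∂(cubeMeasure n) ≥
      (∑ i : Fin n, ∫ x, (marginal g i x)^2 ∂lineMeasure)
        - ((n : ℝ) - 1) * (∫ ξ, g ξ ∂(cubeMeasure n))^2 := by
  set m := ∫ ξ, g ξ ∂(cubeMeasure n) with hm
  have hqmem : ∀ i, MemLp (marginal g i) 2 lineMeasure := fun i => memℒp_marginal i hg
  have hqev : ∀ j, MemLp (fun ξ : Fin n → ℝ => marginal g j (ξ j)) 2 (cubeMeasure n) :=
    fun j => (hqmem j).comp_measurePreserving (mp_eval j)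
  have hone : MemLp (fun _ : ℝ => (1:ℝ)) 2 lineMeasure := memLp_const 1
  have hB : ∀ i, ∫ x, marginal g i x ∂lineMeasure = m := by
    intro i
    have h := integral_mul_comp_eval i hg hone
    simpa using h.symm
  have hD : ∀ i, ∫ ξ, g ξ * marginal g i (ξ i) ∂(cubeMeasure n)
      = ∫ x, (marginal g i x)^2 ∂lineMeasure := by
    intro i
    rw [integral_mul_comp_eval i hg (hqmem i)]
    simp_rw [pow_two]
  have hqint : ∀ j, ∫ ξ, marginal g j (ξ j) ∂(cubeMeasure n) = m := fun j => by
    rw [integral_comp_eval j (hqmem j).1, hB j]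
  have hE : ∀ i j, i ≠ j → ∫ ξ, marginal g i (ξ i) * marginal g j (ξ j) ∂(cubeMeasure n)
      = m * m := by
    intro i j hij
    rw [integral_mul_comp_eval j (hqev i) (hqmem j)]
    have hmarg : ∀ x, marginal (fun ξ : Fin n → ℝ => marginal g i (ξ i)) j x = m := by
      intro x
      show (∫ ξ, marginal g i (Function.update ξ j x i) ∂(cubeMeasure n)) = m
      simp_rw [Function.update_of_ne hij]
      exact hqint i
    simp_rw [hmarg]
    rw [integral_const_mul, hB j]
  have hEii : ∀ i, ∫ ξ, marginal g i (ξ i) * marginal g i (ξ i) ∂(cubeMeasure n)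
      = ∫ x, (marginal g i x)^2 ∂lineMeasure := by
    intro i
    have h := integral_comp_eval i (φ := fun x => marginal g i x * marginal g i x)
      ((hqmem i).1.mul (hqmem i).1)
    rw [h]
    simp_rw [pow_two]
  have hgL1 : Integrable g (cubeMeasure n) := hg.integrable one_le_two
  have hqevL1 : ∀ j, Integrable (fun ξ : Fin n → ℝ => marginal g j (ξ j)) (cubeMeasure n) :=
    fun j => (hqev j).integrable one_le_two
  have hgq : ∀ j, Integrable (fun ξ : Fin n → ℝ => g ξ * marginal g j (ξ j)) (cubeMeasure n) :=
    fun j => mul_mem_L1 hg (hqev j)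
  have hqq : ∀ i j, Integrable
      (fun ξ : Fin n → ℝ => marginal g i (ξ i) * marginal g j (ξ j)) (cubeMeasure n) :=
    fun i j => mul_mem_L1 (hqev i) (hqev j)
  set S : (Fin n → ℝ) → ℝ := fun ξ => ∑ j, marginal g j (ξ j) with hS
  have hSmem : MemLp S 2 (cubeMeasure n) :=
    memLp_finset_sum Finset.univ (fun j _ => hqev j)
  have hSL1 : Integrable S (cubeMeasure n) := hSmem.integrable one_le_two
  have hIS : ∫ ξ, S ξ ∂(cubeMeasure n) = (n : ℝ) * m := by
    simp only [hS]
    rw [integral_finset_sum Finset.univ (fun j _ => hqevL1 j)]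
    simp_rw [hqint]
    rw [Finset.sum_const, Finset.card_univ, Fintype.card_fin, nsmul_eq_mul]
  have hIgS : ∫ ξ, g ξ * S ξ ∂(cubeMeasure n)
      = ∑ j, ∫ x, (marginal g j x)^2 ∂lineMeasure := by
    simp only [hS]
    simp_rw [Finset.mul_sum]
    rw [integral_finset_sum Finset.univ (fun j _ => hgq j)]
    exact Finset.sum_congr rfl fun j _ => hD j
  have inner : ∀ i, ∫ ξ, (∑ j, marginal g i (ξ i) * marginal g j (ξ j)) ∂(cubeMeasure n)
      = (∫ x, (marginal g i x)^2 ∂lineMeasure) + ((n : ℝ) - 1) * (m * m) := by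
    intro i
    rw [integral_finset_sum Finset.univ (fun j _ => hqq i j)]
    rw [← Finset.add_sum_erase Finset.univ _ (Finset.mem_univ i)]
    rw [hEii i]
    congr 1
    rw [Finset.sum_congr rfl (fun j hj => hE i j (Finset.ne_of_mem_erase hj).symm)]
    rw [Finset.sum_const, Finset.card_erase_of_mem (Finset.mem_univ i), Finset.card_univ,
      Fintype.card_fin, nsmul_eq_mul, Nat.cast_sub (by omega), Nat.cast_one]
  have hIS2 : ∫ ξ, S ξ * S ξ ∂(cubeMeasure n)
      = (∑ j, ∫ x, (marginal g j x)^2 ∂lineMeasure) + ((n:ℝ) * ((n:ℝ) - 1)) * (m * m) := by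
    simp only [hS]
    simp_rw [Finset.sum_mul_sum]
    rw [integral_finset_sum Finset.univ
      (fun i _ => integrable_finset_sum Finset.univ (fun j _ => hqq i j))]
    rw [Finset.sum_congr rfl (fun i _ => inner i), Finset.sum_add_distrib, Finset.sum_const,
      Finset.card_univ, Fintype.card_fin, nsmul_eq_mul]
    ring
  have hP : 0 ≤ ∫ ξ, (g ξ - S ξ + ((n:ℝ)-1)*m)^2 ∂(cubeMeasure n) :=
    integral_nonneg fun ξ => sq_nonneg _
  have hexp : ∫ ξ, (g ξ - S ξ + ((n:ℝ)-1)*m)^2 ∂(cubeMeasure n)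
      = ∫ ξ, (g ξ)^2 ∂(cubeMeasure n) + ∫ ξ, S ξ * S ξ ∂(cubeMeasure n)
        + (((n:ℝ)-1)*m)^2 - 2*(∫ ξ, g ξ * S ξ ∂(cubeMeasure n))
        + 2*(((n:ℝ)-1)*m)*(∫ ξ, g ξ ∂(cubeMeasure n))
        - 2*(((n:ℝ)-1)*m)*(∫ ξ, S ξ ∂(cubeMeasure n)) := by
    have heq : (fun ξ => (g ξ - S ξ + ((n:ℝ)-1)*m)^2)
        = fun ξ => ((((g ξ)^2 + S ξ * S ξ) + ((((n:ℝ)-1)*m)^2 + (2*(((n:ℝ)-1)*m)) * g ξ))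
            - ((2 : ℝ) * (g ξ * S ξ) + (2*(((n:ℝ)-1)*m)) * S ξ)) := by
      funext ξ; ring
    rw [heq]
    have i1 : Integrable (fun ξ => (g ξ)^2) (cubeMeasure n) := hg.integrable_sq
    have i2 : Integrable (fun ξ => S ξ * S ξ) (cubeMeasure n) := mul_mem_L1 hSmem hSmem
    have i3 : Integrable (fun ξ : Fin n → ℝ => (((n:ℝ)-1)*m)^2 + (2*(((n:ℝ)-1)*m)) * g ξ)
        (cubeMeasure n) := (integrable_const _).add (hgL1.const_mul _)
    have i4 : Integrable (fun ξ => (2:ℝ) * (g ξ * S ξ)) (cubeMeasure n) :=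
      (mul_mem_L1 hg hSmem).const_mul _
    have i5 : Integrable (fun ξ => (2*(((n:ℝ)-1)*m)) * S ξ) (cubeMeasure n) :=
      hSL1.const_mul _
    have ic : Integrable (fun _ : Fin n → ℝ => (((n:ℝ)-1)*m)^2) (cubeMeasure n) :=
      integrable_const _
    have icg : Integrable (fun ξ : Fin n → ℝ => (2*(((n:ℝ)-1)*m)) * g ξ) (cubeMeasure n) :=
      hgL1.const_mul _
    have i12 : Integrable (fun ξ => (g ξ)^2 + S ξ * S ξ) (cubeMeasure n) := i1.add i2
    have i123 : Integrable
        (fun ξ => ((g ξ)^2 + S ξ * S ξ) + ((((n:ℝ)-1)*m)^2 + (2*(((n:ℝ)-1)*m)) * g ξ))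
        (cubeMeasure n) := i12.add i3
    have i45 : Integrable (fun ξ => (2:ℝ) * (g ξ * S ξ) + (2*(((n:ℝ)-1)*m)) * S ξ)
        (cubeMeasure n) := i4.add i5
    rw [integral_sub i123 i45, integral_add i12 i3,
      integral_add i1 i2, integral_add ic icg,
      integral_add i4 i5, integral_const_mul, integral_const_mul, integral_const_mul,
      integral_const]
    simp only [probReal_univ, ENNReal.toReal_one, smul_eq_mul, one_mul]
    ring
  rw [hexp, ← hm, hIS, hIgS, hIS2] at hP
  rw [ge_iff_le]
  nlinarith [hP]
end

section
/- Among all h ∈ L²([0,1]^n) with prescribed marginals h_i = g_i for given g ∈ L²([0,1]^n), the function h*(ξ) := Σ_{i=1}^n g_i(ξ_i) − (n−1)∫ g dξ has minimal L²-norm, and it is the unique minimizer. -/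
open MeasureTheory

/-- The candidate minimizer `h*` with the same marginals as `g`. -/
noncomputable def hstar {n : ℕ} (g : (Fin n → ℝ) → ℝ) : (Fin n → ℝ) → ℝ :=
  fun ξ => (∑ i : Fin n, marginal g i (ξ i)) - ((n : ℝ) - 1) * ∫ η, g η ∂(cubeMeasure n)

instance inst_s3 : IsProbabilityMeasure lineMeasure :=
  ⟨by simp [lineMeasure, Real.volume_Icc]⟩

instance inst_s3_2 (n : ℕ) : IsProbabilityMeasure (cubeMeasure n) := by
  unfold cubeMeasure; infer_instance

section Aux

variable {n : ℕ}

/-- Generic change of variables along a measure preserving map. -/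
lemma integral_comp_mp {α β : Type*} [MeasurableSpace α] [MeasurableSpace β]
    {μa : Measure α} {μb : Measure β} {f : α → β} (hf : MeasurePreserving f μa μb)
    {g : β → ℝ} (hg : AEStronglyMeasurable g μb) :
    ∫ a, g (f a) ∂μa = ∫ b, g b ∂μb := by
  rw [← hf.map_eq] at hg ⊢
  exact (integral_map hf.measurable.aemeasurable hg).symm

/-- Jensen (Cauchy–Schwarz) for probability measures. -/
lemma sq_int_le {α : Type*} [MeasurableSpace α] {μ : Measure α} [IsProbabilityMeasure μ]
    {u : α → ℝ} (h2 : Integrable (fun a => u a ^ 2) μ) (h1 : Integrable u μ) :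
    (∫ a, u a ∂μ) ^ 2 ≤ ∫ a, u a ^ 2 ∂μ := by
  set c := ∫ a, u a ∂μ with hc
  have hnn : 0 ≤ ∫ a, (u a - c) ^ 2 ∂μ := integral_nonneg fun a => sq_nonneg _
  have hexp : ∫ a, (u a - c) ^ 2 ∂μ = ∫ a, u a ^ 2 ∂μ - c ^ 2 := by
    have e : ∀ a, (u a - c) ^ 2 = (u a ^ 2 - (2 * c) * u a) + c ^ 2 := fun a => by ring
    simp_rw [e]
    have hA : Integrable (fun a => u a ^ 2 - 2 * c * u a) μ := h2.sub (h1.const_mul (2 * c))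
    have hB : Integrable (fun _ : α => c ^ 2) μ := integrable_const _
    rw [integral_add hA hB, integral_sub h2 (h1.const_mul (2 * c)),
      integral_const_mul, integral_const]
    simp only [measure_univ, ENNReal.toReal_one, one_smul, probReal_univ, ← hc]
    ring
  linarith

/-- Product of two `L²` functions is integrable. -/
lemma l2_integrable_mul {α : Type*} [MeasurableSpace α] {μ : Measure α} {u v : α → ℝ}
    (hu : MemLp u 2 μ) (hv : MemLp v 2 μ) :
    Integrable (fun x => u x * v x) μ := by
  have hpqr : (1 : ENNReal) / 1 = 1 / 2 + 1 / 2 := by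
    rw [ENNReal.add_halves]; exact one_div_one
  exact memLp_one_iff_integrable.mp (MemLp.smul (r := 1) hv hu)

lemma updMP (i : Fin n) :
    MeasurePreserving (fun p : (Fin n → ℝ) × ℝ => Function.update p.1 i p.2)
      ((cubeMeasure n).prod lineMeasure) (cubeMeasure n) := by
  refine ⟨measurable_update', ?_⟩
  refine (Measure.pi_eq fun s hs => ?_).symm
  rw [Measure.map_apply measurable_update' (MeasurableSet.univ_pi hs)]
  have hpre : (fun p : (Fin n → ℝ) × ℝ => Function.update p.1 i p.2) ⁻¹' (Set.pi Set.univ s)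
      = (Set.pi Set.univ (fun j => if j = i then Set.univ else s j)) ×ˢ (s i) := by
    ext ⟨ξ, x⟩
    simp only [Set.mem_preimage, Set.mem_pi, Set.mem_univ, forall_true_left, Set.mem_prod]
    constructor
    · intro hmem
      refine ⟨fun j => ?_, by simpa using hmem i⟩
      by_cases hj : j = i
      · simp [hj]
      · rw [if_neg hj]
        simpa [Function.update_of_ne hj] using hmem j
    · rintro ⟨h1, h2⟩ j
      by_cases hj : j = i
      · subst hj; simpa using h2
      · have := h1 j
        rw [if_neg hj] at this
        simpa [Function.update_of_ne hj] using this
  rw [hpre, Measure.prod_prod]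
  have hcube : (cubeMeasure n) (Set.pi Set.univ (fun j => if j = i then Set.univ else s j))
      = ∏ j, lineMeasure (if j = i then Set.univ else s j) :=
    Measure.pi_pi _ _
  rw [hcube]
  have key : ∀ f : Fin n → ENNReal,
      ∏ j, f j = f i * ∏ j ∈ Finset.univ.erase i, f j :=
    fun f => (Finset.mul_prod_erase _ f (Finset.mem_univ i)).symm
  rw [key fun j => lineMeasure (if j = i then Set.univ else s j),
    key fun j => lineMeasure (s j)]
  rw [if_pos rfl, measure_univ, one_mul,
    Finset.prod_congr rfl fun j hj => by rw [if_neg (Finset.ne_of_mem_erase hj)]]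
  exact mul_comm _ _

lemma evalMP (i : Fin n) :
    MeasurePreserving (fun ξ : Fin n → ℝ => ξ i) (cubeMeasure n) lineMeasure := by
  refine ⟨measurable_pi_apply i, ?_⟩
  calc Measure.map (fun ξ : Fin n → ℝ => ξ i) (cubeMeasure n)
      = Measure.map (fun ξ : Fin n → ℝ => ξ i)
          (Measure.map (fun p : (Fin n → ℝ) × ℝ => Function.update p.1 i p.2)
            ((cubeMeasure n).prod lineMeasure)) := by rw [(updMP i).map_eq]
    _ = Measure.map ((fun ξ : Fin n → ℝ => ξ i) ∘
          fun p : (Fin n → ℝ) × ℝ => Function.update p.1 i p.2)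
          ((cubeMeasure n).prod lineMeasure) :=
        Measure.map_map (measurable_pi_apply i) measurable_update'
    _ = Measure.map Prod.snd ((cubeMeasure n).prod lineMeasure) := by
        congr 1
        funext p
        simp [Function.comp, Function.update_self]
    _ = lineMeasure := by
        rw [Measure.map_snd_prod]; simp

lemma sndMP :
    MeasurePreserving (Prod.snd : (Fin n → ℝ) × ℝ → ℝ)
      ((cubeMeasure n).prod lineMeasure) lineMeasure :=
  ⟨measurable_snd, by rw [Measure.map_snd_prod]; simp⟩

variable {u v : (Fin n → ℝ) → ℝ}

lemma upd_memℒp (hu : MemLp u 2 (cubeMeasure n)) (i : Fin n) :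
    MemLp (fun p : (Fin n → ℝ) × ℝ => u (Function.update p.1 i p.2)) 2
      ((cubeMeasure n).prod lineMeasure) :=
  hu.comp_measurePreserving (updMP i)

lemma marginal_aesm (hu : MemLp u 2 (cubeMeasure n)) (i : Fin n) :
    AEStronglyMeasurable (marginal u i) lineMeasure := by
  have hF := (upd_memℒp hu i).aestronglyMeasurable
  have hF' : AEStronglyMeasurable
      (fun p : ℝ × (Fin n → ℝ) => u (Function.update p.2 i p.1))
      (lineMeasure.prod (cubeMeasure n)) := by
    have := hF.comp_quasiMeasurePreserving
      (Measure.measurePreserving_swap (μ := lineMeasure) (ν := cubeMeasure n)).quasiMeasurePreserving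
    simpa [Function.comp_def] using this
  exact hF'.integral_prod_right'

lemma marginal_memℒp (hu : MemLp u 2 (cubeMeasure n)) (i : Fin n) :
    MemLp (marginal u i) 2 lineMeasure := by
  set F := fun p : (Fin n → ℝ) × ℝ => u (Function.update p.1 i p.2) with hFdef
  have hF2 : MemLp F 2 ((cubeMeasure n).prod lineMeasure) := upd_memℒp hu i
  have hFsq : Integrable (fun p => F p ^ 2) ((cubeMeasure n).prod lineMeasure) :=
    hF2.integrable_sq
  have hFi : Integrable F ((cubeMeasure n).prod lineMeasure) := hF2.integrable one_le_two
  have hφ : Integrable (fun x => ∫ ξ, F (ξ, x) ^ 2 ∂(cubeMeasure n)) lineMeasure :=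
    hFsq.integral_prod_right
  have hb : ∀ᵐ x ∂lineMeasure,
      (marginal u i x) ^ 2 ≤ ∫ ξ, F (ξ, x) ^ 2 ∂(cubeMeasure n) := by
    filter_upwards [hFsq.prod_left_ae, hFi.prod_left_ae] with x h2 h1
    exact sq_int_le h2 h1
  have hasm := marginal_aesm hu i
  refine (memLp_two_iff_integrable_sq hasm).mpr ?_
  have hasm2 : AEStronglyMeasurable (fun x => marginal u i x ^ 2) lineMeasure := by
    have : (fun x => marginal u i x ^ 2) = fun x => marginal u i x * marginal u i x := by
      funext x; ring
    rw [this]; exact hasm.mul hasm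
  refine hφ.mono' hasm2 ?_
  filter_upwards [hb] with x hx
  rw [Real.norm_eq_abs, abs_of_nonneg (sq_nonneg _)]
  exact hx

lemma marginal_integrable (hu : MemLp u 2 (cubeMeasure n)) (i : Fin n) :
    Integrable (marginal u i) lineMeasure :=
  (marginal_memℒp hu i).integrable one_le_two

lemma integral_marginal (hu : MemLp u 2 (cubeMeasure n)) (i : Fin n) :
    ∫ x, marginal u i x ∂lineMeasure = ∫ ξ, u ξ ∂(cubeMeasure n) := by
  have hFi : Integrable (fun p : (Fin n → ℝ) × ℝ => u (Function.update p.1 i p.2))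
      ((cubeMeasure n).prod lineMeasure) := (upd_memℒp hu i).integrable one_le_two
  rw [← integral_comp_mp (updMP i) hu.aestronglyMeasurable,
    integral_prod_symm _ hFi]
  rfl

lemma comp_eval_memℒp (hu : MemLp u 2 (cubeMeasure n)) (i : Fin n) :
    MemLp (fun ξ : Fin n → ℝ => marginal u i (ξ i)) 2 (cubeMeasure n) :=
  (marginal_memℒp hu i).comp_measurePreserving (evalMP i)

lemma comp_eval_integrable (hu : MemLp u 2 (cubeMeasure n)) (i : Fin n) :
    Integrable (fun ξ : Fin n → ℝ => marginal u i (ξ i)) (cubeMeasure n) :=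
  (comp_eval_memℒp hu i).integrable one_le_two

lemma integral_comp_eval_s3 (hu : MemLp u 2 (cubeMeasure n)) (i : Fin n) :
    ∫ ξ, marginal u i (ξ i) ∂(cubeMeasure n) = ∫ ξ, u ξ ∂(cubeMeasure n) := by
  rw [integral_comp_mp (evalMP i) (marginal_aesm hu i)]
  exact integral_marginal hu i

lemma hstar_memℒp (hu : MemLp u 2 (cubeMeasure n)) :
    MemLp (hstar u) 2 (cubeMeasure n) := by
  have hsum : MemLp (fun ξ : Fin n → ℝ => ∑ i : Fin n, marginal u i (ξ i)) 2
      (cubeMeasure n) := by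
    exact memLp_finset_sum (μ := cubeMeasure n) (p := 2) Finset.univ
      (f := fun i (ξ : Fin n → ℝ) => marginal u i (ξ i))
      (fun i _ => comp_eval_memℒp hu i)
  have hc : MemLp (fun _ : Fin n → ℝ => ((n : ℝ) - 1) * ∫ η, u η ∂(cubeMeasure n)) 2
      (cubeMeasure n) := memLp_const _
  exact hsum.sub hc

/-- `hstar u` has the same marginals as `u` — pointwise in `x`. -/
lemma marginal_hstar (hu : MemLp u 2 (cubeMeasure n)) (hn : 1 ≤ n) (i : Fin n) (x : ℝ) :
    marginal (hstar u) i x = marginal u i x := by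
  set c := ((n : ℝ) - 1) * ∫ η, u η ∂(cubeMeasure n) with hcdef
  have e : ∀ ξ : Fin n → ℝ,
      hstar u (Function.update ξ i x)
        = (marginal u i x + ∑ j ∈ Finset.univ.erase i, marginal u j (ξ j)) - c := by
    intro ξ
    show (∑ j : Fin n, marginal u j (Function.update ξ i x j)) - c = _
    congr 1
    rw [← Finset.add_sum_erase Finset.univ _ (Finset.mem_univ i), Function.update_self]
    congr 1
    exact Finset.sum_congr rfl fun j hj => by
      rw [Function.update_of_ne (Finset.ne_of_mem_erase hj)]
  have hints : Integrable
      (fun ξ : Fin n → ℝ => marginal u i x + ∑ j ∈ Finset.univ.erase i, marginal u j (ξ j))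
      (cubeMeasure n) := by
    refine (integrable_const _).add ?_
    exact integrable_finset_sum _ fun j _ => comp_eval_integrable hu j
  calc marginal (hstar u) i x
      = ∫ ξ, ((marginal u i x + ∑ j ∈ Finset.univ.erase i, marginal u j (ξ j)) - c)
          ∂(cubeMeasure n) := by
        unfold marginal; exact integral_congr_ae (Filter.Eventually.of_forall fun ξ => e ξ)
    _ = (marginal u i x + ∑ j ∈ Finset.univ.erase i,
          ∫ ξ, marginal u j (ξ j) ∂(cubeMeasure n)) - c := by
        rw [integral_sub hints (integrable_const _), integral_const,
          integral_add (integrable_const _)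
            (integrable_finset_sum _ fun j _ => comp_eval_integrable hu j),
          integral_const, integral_finset_sum _ fun j _ => comp_eval_integrable hu j]
        simp [measure_univ]
    _ = marginal u i x := by
        have : ∀ j ∈ Finset.univ.erase i,
            ∫ ξ, marginal u j (ξ j) ∂(cubeMeasure n) = ∫ ξ, u ξ ∂(cubeMeasure n) :=
          fun j _ => integral_comp_eval_s3 hu j
        rw [Finset.sum_congr rfl this, Finset.sum_const,
          Finset.card_erase_of_mem (Finset.mem_univ i), Finset.card_univ, Fintype.card_fin,
          nsmul_eq_mul, hcdef]
        have : ((n - 1 : ℕ) : ℝ) = (n : ℝ) - 1 := by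
          push_cast [hn]; ring
        rw [this]; ring

/-- Marginal of a difference. -/
lemma marginal_sub_ae (hu : MemLp u 2 (cubeMeasure n)) (hv : MemLp v 2 (cubeMeasure n))
    (i : Fin n) :
    ∀ᵐ x ∂lineMeasure,
      marginal (fun ξ => u ξ - v ξ) i x = marginal u i x - marginal v i x := by
  have hFu : Integrable (fun p : (Fin n → ℝ) × ℝ => u (Function.update p.1 i p.2))
      ((cubeMeasure n).prod lineMeasure) := (upd_memℒp hu i).integrable one_le_two
  have hFv : Integrable (fun p : (Fin n → ℝ) × ℝ => v (Function.update p.1 i p.2))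
      ((cubeMeasure n).prod lineMeasure) := (upd_memℒp hv i).integrable one_le_two
  filter_upwards [hFu.prod_left_ae, hFv.prod_left_ae] with x h1 h2
  exact integral_sub h1 h2

/-- A function with a.e. vanishing `i`-th marginal is orthogonal to functions of `ξ i`. -/
lemma inner_eval_zero {d : (Fin n → ℝ) → ℝ} (hd : MemLp d 2 (cubeMeasure n)) (i : Fin n)
    (hdm : ∀ᵐ x ∂lineMeasure, marginal d i x = 0)
    {m : ℝ → ℝ} (hm : MemLp m 2 lineMeasure) :
    ∫ ξ, d ξ * m (ξ i) ∂(cubeMeasure n) = 0 := by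
  have hmasm : AEStronglyMeasurable (fun ξ : Fin n → ℝ => m (ξ i)) (cubeMeasure n) := by
    have := hm.aestronglyMeasurable.comp_quasiMeasurePreserving
      (evalMP i).quasiMeasurePreserving
    simpa [Function.comp_def] using this
  have hcomp : AEStronglyMeasurable (fun ξ : Fin n → ℝ => d ξ * m (ξ i)) (cubeMeasure n) :=
    hd.aestronglyMeasurable.mul hmasm
  have h1 : MemLp (fun p : (Fin n → ℝ) × ℝ => d (Function.update p.1 i p.2)) 2
      ((cubeMeasure n).prod lineMeasure) := upd_memℒp hd i
  have h2 : MemLp (fun p : (Fin n → ℝ) × ℝ => m p.2) 2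
      ((cubeMeasure n).prod lineMeasure) := hm.comp_measurePreserving sndMP
  have hGint : Integrable (fun p : (Fin n → ℝ) × ℝ => d (Function.update p.1 i p.2) * m p.2)
      ((cubeMeasure n).prod lineMeasure) := l2_integrable_mul h1 h2
  have step1 : ∫ ξ, d ξ * m (ξ i) ∂(cubeMeasure n)
      = ∫ p : (Fin n → ℝ) × ℝ, d (Function.update p.1 i p.2) * m p.2
          ∂((cubeMeasure n).prod lineMeasure) := by
    rw [← integral_comp_mp (updMP i) hcomp]
    refine integral_congr_ae (Filter.Eventually.of_forall fun p => ?_)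
    simp only [Function.update_self]
  rw [step1, integral_prod_symm _ hGint]
  have step2 : ∀ x : ℝ,
      ∫ ξ, d (Function.update ξ i x) * m x ∂(cubeMeasure n) = marginal d i x * m x :=
    fun x => integral_mul_const _ _
  rw [integral_congr_ae (g := fun _ => (0 : ℝ)) ?_, integral_zero]
  filter_upwards [hdm] with x hx
  rw [step2 x, hx, zero_mul]

end Aux

theorem stmt3 (n : ℕ) (hn : 2 ≤ n) (g : (Fin n → ℝ) → ℝ)
    (hg : MemLp g 2 (cubeMeasure n)) :
    MemLp (hstar g) 2 (cubeMeasure n)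
    ∧ (∀ i : Fin n, marginal (hstar g) i =ᵐ[lineMeasure] marginal g i)
    ∧ (∀ h : (Fin n → ℝ) → ℝ, MemLp h 2 (cubeMeasure n) →
        (∀ i : Fin n, marginal h i =ᵐ[lineMeasure] marginal g i) →
        (∫ ξ, (hstar g ξ)^2 ∂(cubeMeasure n) ≤ ∫ ξ, (h ξ)^2 ∂(cubeMeasure n)
          ∧ (∫ ξ, (h ξ)^2 ∂(cubeMeasure n) = ∫ ξ, (hstar g ξ)^2 ∂(cubeMeasure n) →
              h =ᵐ[cubeMeasure n] hstar g))) := by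
  have hn1 : 1 ≤ n := le_trans one_le_two hn
  have hstarL2 : MemLp (hstar g) 2 (cubeMeasure n) := hstar_memℒp hg
  refine ⟨hstarL2, ?_, ?_⟩
  · intro i
    exact Filter.Eventually.of_forall fun x => marginal_hstar hg hn1 i x
  · intro h hh hmar
    -- the difference
    set d : (Fin n → ℝ) → ℝ := fun ξ => h ξ - hstar g ξ with hd_def
    have hdL2 : MemLp d 2 (cubeMeasure n) := hh.sub hstarL2
    have hd_int : Integrable d (cubeMeasure n) := hdL2.integrable one_le_two
    -- the marginals of d vanish a.e.
    have hdm : ∀ i : Fin n, ∀ᵐ x ∂lineMeasure, marginal d i x = 0 := by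
      intro i
      filter_upwards [marginal_sub_ae hh hstarL2 i, hmar i] with x hsub hx
      rw [hd_def] at *
      rw [hsub, hx, marginal_hstar hg hn1 i x, sub_self]
    -- ∫ d = 0
    have hint_d : ∫ ξ, d ξ ∂(cubeMeasure n) = 0 := by
      have i0 : Fin n := ⟨0, lt_of_lt_of_le two_pos hn⟩
      have h1 : ∫ ξ, h ξ ∂(cubeMeasure n) = ∫ ξ, g ξ ∂(cubeMeasure n) := by
        rw [← integral_marginal hh i0, ← integral_marginal hg i0]
        exact integral_congr_ae (hmar i0)
      have h2 : ∫ ξ, hstar g ξ ∂(cubeMeasure n) = ∫ ξ, g ξ ∂(cubeMeasure n) := by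
        rw [← integral_marginal hstarL2 i0, ← integral_marginal hg i0]
        exact integral_congr_ae
          (Filter.Eventually.of_forall fun x => marginal_hstar hg hn1 i0 x)
      rw [hd_def]
      rw [integral_sub (hh.integrable one_le_two) (hstarL2.integrable one_le_two), h1, h2,
        sub_self]
    -- orthogonality: ∫ d · hstar g = 0
    have horth : ∫ ξ, d ξ * hstar g ξ ∂(cubeMeasure n) = 0 := by
      have hterm : ∀ i : Fin n,
          Integrable (fun ξ : Fin n → ℝ => d ξ * marginal g i (ξ i)) (cubeMeasure n) :=
        fun i => l2_integrable_mul hdL2 (comp_eval_memℒp hg i)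
      have e : ∀ ξ : Fin n → ℝ, d ξ * hstar g ξ
          = (∑ i : Fin n, d ξ * marginal g i (ξ i))
            - d ξ * (((n : ℝ) - 1) * ∫ η, g η ∂(cubeMeasure n)) := by
        intro ξ
        show d ξ * ((∑ i : Fin n, marginal g i (ξ i)) - _) = _
        rw [mul_sub, Finset.mul_sum]
      rw [integral_congr_ae (Filter.Eventually.of_forall e),
        integral_sub (integrable_finset_sum _ fun i _ => hterm i)
          (hd_int.mul_const _),
        integral_finset_sum _ fun i _ => hterm i]
      have hz : ∀ i : Fin n, ∫ ξ, d ξ * marginal g i (ξ i) ∂(cubeMeasure n) = 0 :=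
        fun i => inner_eval_zero hdL2 i (hdm i) (marginal_memℒp hg i)
      rw [Finset.sum_congr rfl fun i _ => hz i, Finset.sum_const, smul_zero,
        integral_mul_const, hint_d, zero_mul, sub_zero]
    -- expansion of the square
    have hexp : ∫ ξ, (h ξ) ^ 2 ∂(cubeMeasure n)
        = ∫ ξ, (hstar g ξ) ^ 2 ∂(cubeMeasure n) + ∫ ξ, (d ξ) ^ 2 ∂(cubeMeasure n) := by
      have e : ∀ ξ : Fin n → ℝ,
          (h ξ) ^ 2 = ((hstar g ξ) ^ 2 + (d ξ) ^ 2) + 2 * (d ξ * hstar g ξ) := by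
        intro ξ
        have : h ξ = d ξ + hstar g ξ := by rw [hd_def]; ring
        rw [this]; ring
      have hA : Integrable (fun ξ : Fin n → ℝ => (hstar g ξ) ^ 2 + (d ξ) ^ 2)
          (cubeMeasure n) := hstarL2.integrable_sq.add hdL2.integrable_sq
      have hB : Integrable (fun ξ : Fin n → ℝ => 2 * (d ξ * hstar g ξ))
          (cubeMeasure n) := (l2_integrable_mul hdL2 hstarL2).const_mul 2
      rw [integral_congr_ae (Filter.Eventually.of_forall e),
        integral_add hA hB,
        integral_add hstarL2.integrable_sq hdL2.integrable_sq,
        integral_const_mul, horth]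
      ring
    have hd2nn : 0 ≤ ∫ ξ, (d ξ) ^ 2 ∂(cubeMeasure n) := integral_nonneg fun ξ => sq_nonneg _
    constructor
    · rw [hexp]; linarith
    · intro heq
      have hzero : ∫ ξ, (d ξ) ^ 2 ∂(cubeMeasure n) = 0 := by
        rw [hexp] at heq; linarith
      have := (integral_eq_zero_iff_of_nonneg (fun ξ => sq_nonneg (d ξ))
        hdL2.integrable_sq).mp hzero
      filter_upwards [this] with ξ hξ
      have : d ξ = 0 := by
        have := hξ
        simp only [Pi.zero_apply] at this
        exact pow_eq_zero_iff (n := 2) (by norm_num) |>.mp this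
      have : h ξ - hstar g ξ = 0 := this
      linarith
end

section
/- Let 1 < p < ∞, f ∈ L^p(μ) and Y a closed subspace of L^p(μ). Then ‖f‖_p ≤ ‖f + k‖_p for all k ∈ Y if and only if ∫ sign(f)|f|^{p−1} k dμ = 0 for all k ∈ Y. -/
open MeasureTheory

lemma measurable_realSign : Measurable Real.sign := by
  have h : Real.sign = fun r : ℝ => if r < 0 then (-1:ℝ) else if 0 < r then 1 else 0 :=
    funext fun r => rfl
  rw [h]
  exact Measurable.ite measurableSet_Iio measurable_const
    (Measurable.ite measurableSet_Ioi measurable_const measurable_const)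

lemma realSign_mul_self (y : ℝ) : Real.sign y * y = |y| := by
  rcases lt_trichotomy y 0 with h | h | h
  · rw [Real.sign_of_neg h, abs_of_neg h]; ring
  · simp [h]
  · rw [Real.sign_of_pos h, abs_of_pos h]; ring

lemma sign_rpow_mul_self {p : ℝ} (hp : 1 < p) (y : ℝ) :
    Real.sign y * |y| ^ (p - 1) * y = |y| ^ p := by
  rcases eq_or_ne y 0 with rfl | hy
  · simp [Real.zero_rpow (by linarith : p ≠ 0)]
  · have h2 : Real.sign y * |y| ^ (p - 1) * y = |y| ^ (p - 1) * (Real.sign y * y) := by ring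
    rw [h2, realSign_mul_self, ← Real.rpow_add_one (abs_ne_zero.2 hy)]
    ring_nf

lemma abs_sign_rpow {p : ℝ} (hp : 1 < p) (y : ℝ) :
    |Real.sign y * |y| ^ (p - 1)| = |y| ^ (p - 1) := by
  rcases eq_or_ne y 0 with rfl | hy
  · simp [Real.zero_rpow (by linarith : p - 1 ≠ 0)]
  · rw [abs_mul, abs_of_nonneg (Real.rpow_nonneg (abs_nonneg y) _)]
    rcases Real.sign_apply_eq_of_ne_zero y hy with h | h <;> simp [h]

lemma realSign_mul_abs (y : ℝ) : Real.sign y * |y| = y := by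
  rcases lt_trichotomy y 0 with h | h | h
  · rw [Real.sign_of_neg h, abs_of_neg h]; ring
  · simp [h]
  · rw [Real.sign_of_pos h, abs_of_pos h]; ring

lemma rpow_sub_two_mul_self {p : ℝ} (hp : 1 < p) (y : ℝ) :
    |y| ^ (p - 2) * y = Real.sign y * |y| ^ (p - 1) := by
  rcases eq_or_ne y 0 with rfl | hy
  · simp
  · have h1 : Real.sign y * |y| ^ (p - 1) = |y| ^ (p - 2) * (Real.sign y * |y|) := by
      rw [show p - 1 = (p - 2) + 1 by ring, Real.rpow_add_one (abs_ne_zero.2 hy)]; ring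
    rw [h1, realSign_mul_abs]

section
variable {α : Type*} [MeasurableSpace α] {μ : Measure α} {p : ℝ}

lemma aesm_signF (hp : 1 < p) {g : α → ℝ} (hg : AEMeasurable g μ) :
    AEStronglyMeasurable (fun x => Real.sign (g x) * |g x| ^ (p - 1)) μ :=
  ((measurable_realSign.comp_aemeasurable hg).mul
    ((measurable_abs.comp_aemeasurable hg).pow_const _)).aestronglyMeasurable

lemma memLp_rpow_conj (hp : 1 < p) {g : α → ℝ} (hg : MemLp g (ENNReal.ofReal p) μ) :
    MemLp (fun x => ‖g x‖ ^ (p - 1)) (ENNReal.ofReal (p / (p - 1))) μ := by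
  have h1 : (0:ℝ) < p - 1 := by linarith
  have h2 := hg.norm_rpow_div (ENNReal.ofReal (p - 1))
  rwa [ENNReal.toReal_ofReal h1.le, ← ENNReal.ofReal_div_of_pos h1] at h2

lemma memLp_signF (hp : 1 < p) {g : α → ℝ} (hg : MemLp g (ENNReal.ofReal p) μ) :
    MemLp (fun x => Real.sign (g x) * |g x| ^ (p - 1)) (ENNReal.ofReal (p / (p - 1))) μ := by
  refine (memLp_rpow_conj hp hg).of_le
    (aesm_signF hp hg.aestronglyMeasurable.aemeasurable) (ae_of_all _ fun x => ?_)
  rw [Real.norm_eq_abs, abs_sign_rpow hp, Real.norm_eq_abs, Real.norm_eq_abs,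
    abs_of_nonneg (Real.rpow_nonneg (abs_nonneg _) _)]

lemma integrable_mul_conj (hp : 1 < p) {φ g : α → ℝ}
    (hφ : MemLp φ (ENNReal.ofReal (p / (p - 1))) μ) (hg : MemLp g (ENNReal.ofReal p) μ) :
    Integrable (fun x => φ x * g x) μ := by
  have hpq : p.HolderConjugate (p / (p - 1)) := Real.HolderConjugate.conjExponent hp
  rw [← memLp_one_iff_integrable]
  have : ENNReal.HolderTriple (ENNReal.ofReal (p / (p - 1))) (ENNReal.ofReal p) 1 :=
    ⟨by rw [inv_one, add_comm]; exact hpq.inv_add_inv_ennreal⟩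
  have h := MemLp.smul (r := 1) hg hφ
  · exact h
end

lemma sign_rpow_abs_conj {p : ℝ} (hp : 1 < p) (y : ℝ) :
    |Real.sign y * |y| ^ (p - 1)| ^ (p / (p - 1)) = |y| ^ p := by
  have h1 : p - 1 ≠ 0 := by linarith
  rw [abs_sign_rpow hp, ← Real.rpow_mul (abs_nonneg y)]
  congr 1
  field_simp

section
variable {α : Type*} [MeasurableSpace α] {μ : Measure α} {p : ℝ}

lemma Lp_norm_eq (hp : 1 < p) [Fact (1 ≤ ENNReal.ofReal p)] (g : Lp ℝ (ENNReal.ofReal p) μ) :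
    ‖g‖ = (∫ x, |(g : α → ℝ) x| ^ p ∂μ) ^ (1 / p) := by
  have hp0 : (0:ℝ) < p := by linarith
  have h0 : ENNReal.ofReal p ≠ 0 := by simp [hp0]
  have ht : ENNReal.ofReal p ≠ ⊤ := ENNReal.ofReal_ne_top
  rw [Lp.norm_def, MemLp.eLpNorm_eq_integral_rpow_norm h0 ht (Lp.memLp g)]
  rw [ENNReal.toReal_ofReal (by positivity), ENNReal.toReal_ofReal hp0.le]
  simp [Real.norm_eq_abs, one_div]

lemma Lp_norm_rpow_eq (hp : 1 < p) [Fact (1 ≤ ENNReal.ofReal p)] (g : Lp ℝ (ENNReal.ofReal p) μ) :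
    ‖g‖ ^ p = ∫ x, |(g : α → ℝ) x| ^ p ∂μ := by
  have hp0 : (0:ℝ) < p := by linarith
  rw [Lp_norm_eq hp g, ← Real.rpow_mul (integral_nonneg fun x => Real.rpow_nonneg (abs_nonneg _) _),
    one_div, inv_mul_cancel₀ hp0.ne', Real.rpow_one]
end

section
variable {α : Type*} [MeasurableSpace α] {μ : Measure α} {p : ℝ}

theorem bwd [Fact (1 ≤ ENNReal.ofReal p)] (hp : 1 < p)
    (f k : Lp ℝ (ENNReal.ofReal p) μ)
    (horth : ∫ x, Real.sign ((f : α → ℝ) x) * |(f : α → ℝ) x| ^ (p - 1)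
        * (k : α → ℝ) x ∂μ = 0) :
    ‖f‖ ≤ ‖f + k‖ := by
  have hp0 : (0:ℝ) < p := lt_trans one_pos hp
  have hpq : p.HolderConjugate (p / (p - 1)) := Real.HolderConjugate.conjExponent hp
  set q : ℝ := p / (p - 1) with hq
  set fc : α → ℝ := (f : α → ℝ) with hfc
  set kc : α → ℝ := (k : α → ℝ) with hkc
  have hfm : MemLp fc (ENNReal.ofReal p) μ := Lp.memLp f
  have hkm : MemLp kc (ENNReal.ofReal p) μ := Lp.memLp k
  set F : α → ℝ := fun x => Real.sign (fc x) * |fc x| ^ (p - 1) with hF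
  have hFm : MemLp F (ENNReal.ofReal q) μ := memLp_signF hp hfm
  set A : ℝ := ∫ x, |fc x| ^ p ∂μ with hA
  set B : ℝ := ∫ x, |fc x + kc x| ^ p ∂μ with hB
  have hA0 : 0 ≤ A := integral_nonneg fun x => Real.rpow_nonneg (abs_nonneg _) _
  have hB0 : 0 ≤ B := integral_nonneg fun x => Real.rpow_nonneg (abs_nonneg _) _
  -- the two Lp norms
  have hnf : ‖f‖ = A ^ (1 / p) := Lp_norm_eq hp f
  have hnfk : ‖f + k‖ = B ^ (1 / p) := by
    rw [Lp_norm_eq hp (f + k), hB]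
    congr 1
    refine integral_congr_ae ?_
    filter_upwards [Lp.coeFn_add f k] with x hx
    rw [hx]; rfl
  -- integrability
  have hFf : Integrable (fun x => F x * fc x) μ := integrable_mul_conj hp hFm hfm
  have hFk : Integrable (fun x => F x * kc x) μ := integrable_mul_conj hp hFm hkm
  have hsum : ∫ x, F x * (fc x + kc x) ∂μ = A := by
    have h1 : ∫ x, F x * (fc x + kc x) ∂μ = (∫ x, F x * fc x ∂μ) + ∫ x, F x * kc x ∂μ := by
      rw [← integral_add hFf hFk]
      congr 1; funext x; ring
    rw [h1, horth, add_zero, hA]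
    exact integral_congr_ae (ae_of_all _ fun x => sign_rpow_mul_self hp (fc x))
  -- Hölder
  have habs : ∫ x, |F x| ^ q ∂μ = A := by
    exact integral_congr_ae (ae_of_all _ fun x => sign_rpow_abs_conj hp (fc x))
  have hint : Integrable (fun x => F x * (fc x + kc x)) μ := by
    have := hFf.add hFk
    refine this.congr (ae_of_all _ fun x => ?_)
    simp only [Pi.add_apply]; ring
  have hFq : MemLp (fun x => |F x|) (ENNReal.ofReal q) μ := by
    simpa [Real.norm_eq_abs] using hFm.norm
  have hGp : MemLp (fun x => |fc x + kc x|) (ENNReal.ofReal p) μ := (hfm.add hkm).norm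
  have hholder : ∫ x, F x * (fc x + kc x) ∂μ ≤ A ^ (1 / q) * B ^ (1 / p) := by
    have h1 : ∫ x, F x * (fc x + kc x) ∂μ ≤ ∫ x, |F x| * |fc x + kc x| ∂μ :=
      calc ∫ x, F x * (fc x + kc x) ∂μ ≤ |∫ x, F x * (fc x + kc x) ∂μ| := le_abs_self _
        _ ≤ ∫ x, |F x| * |fc x + kc x| ∂μ := by
            simpa [Real.norm_eq_abs, abs_mul] using
              norm_integral_le_integral_norm (μ := μ) (fun x => F x * (fc x + kc x))
    refine h1.trans ?_
    have h2 := integral_mul_le_Lp_mul_Lq_of_nonneg (μ := μ) hpq.symm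
      (ae_of_all _ fun x => abs_nonneg (F x)) (ae_of_all _ fun x => abs_nonneg (fc x + kc x))
      hFq hGp
    rwa [habs, ← hB] at h2
  rw [hnf, hnfk]
  rw [hsum] at hholder
  rcases eq_or_lt_of_le hA0 with h0 | hApos
  · rw [← h0, Real.zero_rpow (one_div_ne_zero hp0.ne')]
    positivity
  · have hsum1 : 1 / q + 1 / p = 1 := by
      rw [one_div, one_div, add_comm]; exact hpq.inv_add_inv_eq_one
    have key : A ^ (1 / q) * A ^ (1 / p) ≤ A ^ (1 / q) * B ^ (1 / p) := by
      rw [← Real.rpow_add hApos, hsum1, Real.rpow_one]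
      exact hholder
    exact le_of_mul_le_mul_left key (Real.rpow_pos_of_pos hApos _)
end

section
variable {α : Type*} [MeasurableSpace α] {μ : Measure α} {p : ℝ}

theorem fwd [Fact (1 ≤ ENNReal.ofReal p)] (hp : 1 < p)
    (f : Lp ℝ (ENNReal.ofReal p) μ) (Y : Submodule ℝ (Lp ℝ (ENNReal.ofReal p) μ))
    (hmin : ∀ k ∈ Y, ‖f‖ ≤ ‖f + k‖) (k : Lp ℝ (ENNReal.ofReal p) μ) (hk : k ∈ Y) :
    ∫ x, Real.sign ((f : α → ℝ) x) * |(f : α → ℝ) x| ^ (p - 1) * (k : α → ℝ) x ∂μ = 0 := by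
  have hp0 : (0:ℝ) < p := lt_trans one_pos hp
  set fc : α → ℝ := (f : α → ℝ) with hfc
  set kc : α → ℝ := (k : α → ℝ) with hkc
  have hfm : MemLp fc (ENNReal.ofReal p) μ := Lp.memLp f
  have hkm : MemLp kc (ENNReal.ofReal p) μ := Lp.memLp k
  have hfa : AEMeasurable fc μ := hfm.aestronglyMeasurable.aemeasurable
  have hka : AEMeasurable kc μ := hkm.aestronglyMeasurable.aemeasurable
  set G : ℝ → α → ℝ := fun t a => |fc a + t * kc a| ^ p with hG
  set G' : ℝ → α → ℝ := fun t a => p * |fc a + t * kc a| ^ (p - 2) * (fc a + t * kc a) * kc a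
    with hG'
  set bound : α → ℝ := fun a => p * ((|fc a| + |kc a|) ^ (p - 1) * |kc a|) with hbound
  have haem : ∀ t : ℝ, AEMeasurable (fun a => fc a + t * kc a) μ :=
    fun t => hfa.add (hka.const_mul t)
  have hF_meas : ∀ᶠ t in nhds (0:ℝ), AEStronglyMeasurable (G t) μ :=
    Filter.Eventually.of_forall fun t =>
      ((measurable_abs.comp_aemeasurable (haem t)).pow_const p).aestronglyMeasurable
  have hF_int : Integrable (G 0) μ := by
    have h1 := hfm.integrable_norm_rpow (by simp [hp0] : ENNReal.ofReal p ≠ 0)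
      ENNReal.ofReal_ne_top
    refine h1.congr (ae_of_all _ fun a => ?_)
    simp [hG, Real.norm_eq_abs, ENNReal.toReal_ofReal hp0.le]
  have hF'_meas : AEStronglyMeasurable (G' 0) μ := by
    exact (((aemeasurable_const.mul
      ((measurable_abs.comp_aemeasurable (haem 0)).pow_const _)).mul (haem 0)).mul
      hka).aestronglyMeasurable
  have h_bound : ∀ᵐ a ∂μ, ∀ t ∈ Metric.ball (0:ℝ) 1, ‖G' t a‖ ≤ bound a := by
    refine ae_of_all _ fun a t ht => ?_
    have hy : |fc a + t * kc a| ≤ |fc a| + |kc a| := by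
      refine (abs_add_le _ _).trans ?_
      have h4 : |t * kc a| ≤ |kc a| := by
        rw [abs_mul]
        exact mul_le_of_le_one_left (abs_nonneg _)
          (le_of_lt (by simpa using mem_ball_zero_iff.1 ht))
      linarith
    have e : G' t a = p * (Real.sign (fc a + t * kc a) * |fc a + t * kc a| ^ (p - 1)) * kc a := by
      rw [hG', ← rpow_sub_two_mul_self hp (fc a + t * kc a)]; ring
    rw [Real.norm_eq_abs, e, abs_mul, abs_mul, abs_sign_rpow hp, abs_of_pos hp0, hbound,
      mul_assoc]
    have h5 : |fc a + t * kc a| ^ (p - 1) ≤ (|fc a| + |kc a|) ^ (p - 1) :=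
      Real.rpow_le_rpow (abs_nonneg _) hy (by linarith)
    exact mul_le_mul_of_nonneg_left
      (mul_le_mul_of_nonneg_right h5 (abs_nonneg _)) hp0.le
  have bound_int : Integrable bound μ := by
    have h1 : MemLp (fun a => |fc a| + |kc a|) (ENNReal.ofReal p) μ := hfm.norm.add hkm.norm
    have h2 : MemLp (fun a => (|fc a| + |kc a|) ^ (p - 1)) (ENNReal.ofReal (p / (p - 1))) μ := by
      refine (memLp_rpow_conj hp h1).ae_eq (ae_of_all _ fun a => ?_)
      rw [Real.norm_eq_abs, abs_of_nonneg (by positivity)]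
    exact (integrable_mul_conj hp h2 hkm.norm).const_mul p
  have h_diff : ∀ᵐ a ∂μ, ∀ t ∈ Metric.ball (0:ℝ) 1, HasDerivAt (fun t => G t a) (G' t a) t := by
    refine ae_of_all _ fun a t _ => ?_
    have h1 : HasDerivAt (fun t : ℝ => fc a + t * kc a) (kc a) t := by
      simpa using ((hasDerivAt_id t).mul_const (kc a)).const_add (fc a)
    have h2 := hasDerivAt_abs_rpow (fc a + t * kc a) hp
    have h3 := h2.comp t h1
    simpa [hG, hG', Function.comp_def, mul_assoc] using h3
  obtain ⟨hG'int, hderiv⟩ := hasDerivAt_integral_of_dominated_loc_of_deriv_le (Metric.ball_mem_nhds 0 one_pos)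
    hF_meas hF_int hF'_meas h_bound bound_int h_diff
  have hmin0 : IsLocalMin (fun t => ∫ a, G t a ∂μ) 0 := by
    have e : ∀ s : ℝ, ∫ a, G s a ∂μ = ‖f + s • k‖ ^ p := by
      intro s
      rw [Lp_norm_rpow_eq hp (f + s • k)]
      refine integral_congr_ae ?_
      filter_upwards [Lp.coeFn_add f (s • k), Lp.coeFn_smul s k] with a h1 h2
      rw [hG]
      rw [h1, Pi.add_apply, h2, Pi.smul_apply, smul_eq_mul]
    refine Filter.Eventually.of_forall fun t => ?_
    simp only [e]
    have h0 : ‖f + (0:ℝ) • k‖ = ‖f‖ := by rw [zero_smul, add_zero]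
    rw [h0]
    exact Real.rpow_le_rpow (norm_nonneg _) (hmin _ (Y.smul_mem t hk)) hp0.le
  have hzero : ∫ a, G' 0 a ∂μ = 0 := hmin0.hasDerivAt_eq_zero hderiv
  have e2 : ∫ a, G' 0 a ∂μ = p * ∫ a, Real.sign (fc a) * |fc a| ^ (p - 1) * kc a ∂μ := by
    rw [← integral_const_mul]
    refine integral_congr_ae (ae_of_all _ fun a => ?_)
    simp only [hG', zero_mul, add_zero]
    linear_combination kc a * p * rpow_sub_two_mul_self hp (fc a)
  rw [e2] at hzero
  exact (mul_eq_zero.1 hzero).resolve_left hp0.ne'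
end

theorem stmt8 {α : Type*} [MeasurableSpace α] (μ : Measure α) [IsFiniteMeasure μ]
    (p : ℝ) (hp : 1 < p) [Fact (1 ≤ ENNReal.ofReal p)]
    (f : Lp ℝ (ENNReal.ofReal p) μ) (Y : Submodule ℝ (Lp ℝ (ENNReal.ofReal p) μ))
    (hY : IsClosed (Y : Set (Lp ℝ (ENNReal.ofReal p) μ))) :
    (∀ k ∈ Y, ‖f‖ ≤ ‖f + k‖) ↔
      (∀ k ∈ Y, ∫ x, Real.sign ((f : α → ℝ) x) * |(f : α → ℝ) x| ^ (p - 1)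
        * (k : α → ℝ) x ∂μ = 0) := by
  constructor
  · intro hmin k hk
    exact fwd hp f Y hmin k hk
  · intro horth k hk
    exact bwd hp f k (horth k hk)
end

section
/- Let 1 < p < ∞ and let h*, h ∈ L^p([0,1]^n) both have the same marginals and both satisfy: sign of the function times its (p−1)-th power equals a sum (1/n)Σ_i Φ_i(ξ_i), resp. (1/n)Σ_i Ψ_i(ξ_i), of single-variable L^q functions. Then h = h* almost everywhere. -/
open MeasureTheory

open scoped ENNReal

/-- strict monotonicity of `t ↦ sign t * |t|^(p-1)` -/
lemma signPow_strictMono {p : ℝ} (hp : 1 < p) :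
    StrictMono (fun t : ℝ => Real.sign t * |t| ^ (p - 1)) := by
  have hp0 : 0 < p - 1 := by linarith
  have hpos : ∀ t : ℝ, 0 < t → Real.sign t * |t| ^ (p - 1) = t ^ (p - 1) := fun t ht => by
    rw [Real.sign_of_pos ht, abs_of_pos ht, one_mul]
  have hneg : ∀ t : ℝ, t < 0 → Real.sign t * |t| ^ (p - 1) = -((-t) ^ (p - 1)) := fun t ht => by
    rw [Real.sign_of_neg ht, abs_of_neg ht, neg_one_mul]
  intro t u htu
  dsimp only
  rcases lt_trichotomy t 0 with ht | rfl | ht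
  · rcases lt_trichotomy u 0 with hu | rfl | hu
    · rw [hneg t ht, hneg u hu]
      have : (-u) ^ (p - 1) < (-t) ^ (p - 1) :=
        Real.rpow_lt_rpow (by linarith) (by linarith) hp0
      linarith
    · rw [hneg t ht]
      simp only [Real.sign_zero, zero_mul]
      have : (0:ℝ) < (-t) ^ (p - 1) := Real.rpow_pos_of_pos (by linarith) _
      linarith
    · rw [hneg t ht, hpos u hu]
      have h1 : (0:ℝ) < (-t) ^ (p - 1) := Real.rpow_pos_of_pos (by linarith) _
      have h2 : (0:ℝ) < u ^ (p - 1) := Real.rpow_pos_of_pos hu _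
      linarith
  · rw [hpos u htu]
    simp only [Real.sign_zero, zero_mul]
    exact Real.rpow_pos_of_pos htu _
  · rw [hpos t ht, hpos u (ht.trans htu)]
    exact Real.rpow_lt_rpow ht.le htu hp0

lemma signPow_diff_nonneg {p : ℝ} (hp : 1 < p) (a b : ℝ) :
    0 ≤ (a - b) * (Real.sign a * |a| ^ (p - 1) - Real.sign b * |b| ^ (p - 1)) := by
  rcases lt_trichotomy a b with hab | rfl | hab
  · have h2 : Real.sign a * |a| ^ (p - 1) < Real.sign b * |b| ^ (p - 1) :=
      signPow_strictMono hp hab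
    nlinarith
  · simp
  · have h2 : Real.sign b * |b| ^ (p - 1) < Real.sign a * |a| ^ (p - 1) :=
      signPow_strictMono hp hab
    nlinarith

lemma signPow_diff_eq_zero {p : ℝ} (hp : 1 < p) {a b : ℝ}
    (h : (a - b) * (Real.sign a * |a| ^ (p - 1) - Real.sign b * |b| ^ (p - 1)) = 0) : a = b := by
  by_contra hab
  rcases lt_or_gt_of_ne hab with hab | hab
  · have h2 : Real.sign a * |a| ^ (p - 1) < Real.sign b * |b| ^ (p - 1) :=
      signPow_strictMono hp hab
    nlinarith
  · have h2 : Real.sign b * |b| ^ (p - 1) < Real.sign a * |a| ^ (p - 1) :=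
      signPow_strictMono hp hab
    nlinarith

lemma update_eq_insertNth {m : ℕ} (i : Fin (m + 1)) (x : ℝ) (ξ : Fin (m + 1) → ℝ) :
    Function.update ξ i x = i.insertNth x (i.removeNth ξ) :=
  (Fin.insertNth_removeNth i x ξ).symm

/-- `marginal` written as an integral over `[0,1] × [0,1]^m`. -/
lemma marginal_eq {m : ℕ} (g : (Fin (m + 1) → ℝ) → ℝ) (i : Fin (m + 1)) (x : ℝ) :
    marginal g i x
      = ∫ z : ℝ × (Fin m → ℝ), g (i.insertNth x z.2)
          ∂(lineMeasure.prod (cubeMeasure m)) := by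
  have hmp := measurePreserving_piFinSuccAbove (fun _ : Fin (m + 1) => lineMeasure) i
  have h := hmp.integral_comp
    (MeasurableEquiv.piFinSuccAbove (fun _ : Fin (m + 1) => ℝ) i).measurableEmbedding
    (fun z : ℝ × (Fin m → ℝ) => g (i.insertNth x z.2))
  unfold marginal cubeMeasure
  rw [← h]
  congr 1
  funext ξ
  simp only [MeasurableEquiv.piFinSuccAbove_apply]
  rw [update_eq_insertNth]
  rfl

lemma map_eval_cube {m : ℕ} (i : Fin (m + 1)) :
    Measure.map (fun ξ : Fin (m + 1) → ℝ => ξ i) (cubeMeasure (m + 1)) = lineMeasure := by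
  have hmp := measurePreserving_piFinSuccAbove (fun _ : Fin (m + 1) => lineMeasure) i
  have h1 : (fun ξ : Fin (m + 1) → ℝ => ξ i)
      = Prod.fst ∘ (MeasurableEquiv.piFinSuccAbove (fun _ => ℝ) i) := rfl
  have h2 : Measure.map (MeasurableEquiv.piFinSuccAbove (fun _ : Fin (m+1) => ℝ) i)
      (cubeMeasure (m + 1)) = lineMeasure.prod (cubeMeasure m) := hmp.map_eq
  rw [h1, ← Measure.map_map measurable_fst (MeasurableEquiv.measurable _), h2,
    Measure.map_fst_prod]
  simp

lemma memLp_comp_eval {m : ℕ} {r : ℝ≥0∞} (i : Fin (m + 1)) {g : ℝ → ℝ}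
    (hg : MemLp g r lineMeasure) :
    MemLp (fun ξ : Fin (m + 1) → ℝ => g (ξ i)) r (cubeMeasure (m + 1)) :=
  MemLp.comp_of_map (by rw [map_eval_cube i]; exact hg) (measurable_pi_apply i).aemeasurable

lemma integrable_mul_memLp {α : Type*} [MeasurableSpace α] {μ : Measure α} {p q : ℝ}
    (hp : 1 < p) (hq : q = p / (p - 1)) {f G : α → ℝ}
    (hf : MemLp f (ENNReal.ofReal p) μ) (hG : MemLp G (ENNReal.ofReal q) μ) :
    Integrable (fun x => f x * G x) μ := by
  have hpq : p.HolderConjugate q := by rw [hq]; exact Real.HolderConjugate.conjExponent hp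
  have hpqr : (1 : ℝ≥0∞) / 1 = 1 / ENNReal.ofReal q + 1 / ENNReal.ofReal p := by
    simp only [one_div, inv_one]
    rw [add_comm]
    exact hpq.inv_add_inv_ennreal.symm
  have h1 : MemLp (G • f) 1 μ := by
    haveI : ENNReal.HolderTriple (ENNReal.ofReal q) (ENNReal.ofReal p) 1 :=
      ⟨by simpa [one_div] using hpqr.symm⟩
    exact hf.smul hG
  have h2 := memLp_one_iff_integrable.mp h1
  exact h2.congr (Filter.Eventually.of_forall fun x => mul_comm (G x) (f x))

lemma key_integral_zero {m : ℕ} {p q : ℝ} (hp : 1 < p) (hq : q = p / (p - 1))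
    {h hstar : (Fin (m + 1) → ℝ) → ℝ}
    (hhL : MemLp h (ENNReal.ofReal p) (cubeMeasure (m + 1)))
    (hhsL : MemLp hstar (ENNReal.ofReal p) (cubeMeasure (m + 1)))
    (hmarg : ∀ i : Fin (m + 1), marginal h i =ᵐ[lineMeasure] marginal hstar i)
    (i : Fin (m + 1)) {g : ℝ → ℝ} (hg : MemLp g (ENNReal.ofReal q) lineMeasure) :
    ∫ ξ, (h ξ - hstar ξ) * g (ξ i) ∂(cubeMeasure (m + 1)) = 0 := by
  have hp1 : (1 : ℝ≥0∞) ≤ ENNReal.ofReal p := ENNReal.one_le_ofReal.mpr hp.le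
  have hInt_h : Integrable h (cubeMeasure (m + 1)) := hhL.integrable hp1
  have hInt_hs : Integrable hstar (cubeMeasure (m + 1)) := hhsL.integrable hp1
  have hintc : Integrable (fun ξ => (h ξ - hstar ξ) * g (ξ i)) (cubeMeasure (m + 1)) :=
    integrable_mul_memLp hp hq (hhL.sub hhsL) (memLp_comp_eval i hg)
  set P : Measure (ℝ × (Fin m → ℝ)) := lineMeasure.prod (cubeMeasure m) with hP
  have hmp := measurePreserving_piFinSuccAbove (fun _ : Fin (m + 1) => lineMeasure) i
  set e := MeasurableEquiv.piFinSuccAbove (fun _ : Fin (m + 1) => ℝ) i with he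
  have hmps : MeasurePreserving e.symm P (cubeMeasure (m + 1)) := hmp.symm e
  have hesymm : ∀ z : ℝ × (Fin m → ℝ), e.symm z = i.insertNth z.1 z.2 := by
    intro z
    simp [he, MeasurableEquiv.piFinSuccAbove, Fin.insertNthEquiv]
  -- transfer the integral to the product space
  have hIeq : ∫ ξ, (h ξ - hstar ξ) * g (ξ i) ∂(cubeMeasure (m + 1))
      = ∫ z : ℝ × (Fin m → ℝ),
          (h (i.insertNth z.1 z.2) - hstar (i.insertNth z.1 z.2)) * g z.1 ∂P := by
    rw [← hmps.integral_comp e.symm.measurableEmbedding (fun ξ => (h ξ - hstar ξ) * g (ξ i))]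
    refine integral_congr_ae (Filter.Eventually.of_forall fun z => ?_)
    simp [hesymm z, Fin.insertNth_apply_same]
  have hintP : Integrable
      (fun z : ℝ × (Fin m → ℝ) =>
        (h (i.insertNth z.1 z.2) - hstar (i.insertNth z.1 z.2)) * g z.1) P := by
    have := (hmps.integrable_comp_emb e.symm.measurableEmbedding).2 hintc
    exact this.congr (Filter.Eventually.of_forall fun z => by
      simp [Function.comp, hesymm z, Fin.insertNth_apply_same])
  -- slice integrability
  have hIh : Integrable (fun z : ℝ × (Fin m → ℝ) => h (i.insertNth z.1 z.2)) P := by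
    have := (hmps.integrable_comp_emb e.symm.measurableEmbedding).2 hInt_h
    exact this.congr (Filter.Eventually.of_forall fun z => by
      simp [Function.comp, hesymm z])
  have hIhs : Integrable (fun z : ℝ × (Fin m → ℝ) => hstar (i.insertNth z.1 z.2)) P := by
    have := (hmps.integrable_comp_emb e.symm.measurableEmbedding).2 hInt_hs
    exact this.congr (Filter.Eventually.of_forall fun z => by
      simp [Function.comp, hesymm z])
  have hmapsnd : Measure.map Prod.snd P = cubeMeasure m := by
    rw [hP, Measure.map_snd_prod]
    simp
  -- the inner integral vanishes a.e.
  have hae : ∀ᵐ x ∂lineMeasure,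
      (∫ y, (h (i.insertNth x y) - hstar (i.insertNth x y)) ∂(cubeMeasure m)) = 0 := by
    filter_upwards [hIh.prod_right_ae, hIhs.prod_right_ae, hmarg i] with x hx1 hx2 hx3
    have mh : marginal h i x = ∫ y, h (i.insertNth x y) ∂(cubeMeasure m) := by
      rw [marginal_eq]
      have hsm : AEStronglyMeasurable (fun y => h (i.insertNth x y)) (Measure.map Prod.snd P) := by
        rw [hmapsnd]; exact hx1.aestronglyMeasurable
      have := integral_map (φ := Prod.snd) (μ := P) measurable_snd.aemeasurable hsm
      rw [hmapsnd] at this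
      exact this.symm
    have mhs : marginal hstar i x = ∫ y, hstar (i.insertNth x y) ∂(cubeMeasure m) := by
      rw [marginal_eq]
      have hsm : AEStronglyMeasurable (fun y => hstar (i.insertNth x y))
          (Measure.map Prod.snd P) := by
        rw [hmapsnd]; exact hx2.aestronglyMeasurable
      have := integral_map (φ := Prod.snd) (μ := P) measurable_snd.aemeasurable hsm
      rw [hmapsnd] at this
      exact this.symm
    rw [integral_sub hx1 hx2, ← mh, ← mhs, hx3, sub_self]
  rw [hIeq, integral_prod _ hintP]
  rw [show (0:ℝ) = ∫ (_ : ℝ), (0:ℝ) ∂lineMeasure by simp]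
  refine integral_congr_ae ?_
  filter_upwards [hae] with x hx
  rw [integral_mul_const, hx, zero_mul]

theorem stmt12 (n : ℕ) (hn : 2 ≤ n) (p q : ℝ) (hp : 1 < p) (hq : q = p / (p - 1))
    (hstar h : (Fin n → ℝ) → ℝ)
    (hhsL : MemLp hstar (ENNReal.ofReal p) (cubeMeasure n))
    (hhL : MemLp h (ENNReal.ofReal p) (cubeMeasure n))
    (hmarg : ∀ i : Fin n, marginal h i =ᵐ[lineMeasure] marginal hstar i)
    (Φ Ψ : Fin n → ℝ → ℝ)
    (hΦ : ∀ i, MemLp (Φ i) (ENNReal.ofReal q) lineMeasure)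
    (hΨ : ∀ i, MemLp (Ψ i) (ENNReal.ofReal q) lineMeasure)
    (hdual₁ : (fun ξ => Real.sign (hstar ξ) * |hstar ξ| ^ (p - 1)) =ᵐ[cubeMeasure n]
      fun ξ => (1 / (n : ℝ)) * ∑ i : Fin n, Φ i (ξ i))
    (hdual₂ : (fun ξ => Real.sign (h ξ) * |h ξ| ^ (p - 1)) =ᵐ[cubeMeasure n]
      fun ξ => (1 / (n : ℝ)) * ∑ i : Fin n, Ψ i (ξ i)) :
    h =ᵐ[cubeMeasure n] hstar := by
  obtain ⟨m, rfl⟩ : ∃ m, n = m + 1 := ⟨n - 1, by omega⟩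
  set μ : Measure (Fin (m + 1) → ℝ) := cubeMeasure (m + 1) with hμ
  -- L^q membership of the single-variable sums
  have hsumΨ : MemLp (fun ξ : Fin (m + 1) → ℝ =>
      (1 / ((m + 1 : ℕ) : ℝ)) * ∑ i : Fin (m + 1), Ψ i (ξ i)) (ENNReal.ofReal q) μ := by
    apply MemLp.const_mul
    exact memLp_finsetSum Finset.univ fun i _ => memLp_comp_eval i (hΨ i)
  have hsumΦ : MemLp (fun ξ : Fin (m + 1) → ℝ =>
      (1 / ((m + 1 : ℕ) : ℝ)) * ∑ i : Fin (m + 1), Φ i (ξ i)) (ENNReal.ofReal q) μ := by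
    apply MemLp.const_mul
    exact memLp_finsetSum Finset.univ fun i _ => memLp_comp_eval i (hΦ i)
  have huL : MemLp (fun ξ => h ξ - hstar ξ) (ENNReal.ofReal p) μ := hhL.sub hhsL
  -- integrability of the four products
  have hintΨ : Integrable (fun ξ =>
      (h ξ - hstar ξ) * ((1 / ((m + 1 : ℕ) : ℝ)) * ∑ i : Fin (m + 1), Ψ i (ξ i))) μ :=
    integrable_mul_memLp hp hq huL hsumΨ
  have hintΦ : Integrable (fun ξ =>
      (h ξ - hstar ξ) * ((1 / ((m + 1 : ℕ) : ℝ)) * ∑ i : Fin (m + 1), Φ i (ξ i))) μ :=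
    integrable_mul_memLp hp hq huL hsumΦ
  have hintA : Integrable (fun ξ =>
      (h ξ - hstar ξ) * (Real.sign (h ξ) * |h ξ| ^ (p - 1))) μ :=
    hintΨ.congr (by filter_upwards [hdual₂] with ξ hξ; rw [hξ])
  have hintB : Integrable (fun ξ =>
      (h ξ - hstar ξ) * (Real.sign (hstar ξ) * |hstar ξ| ^ (p - 1))) μ :=
    hintΦ.congr (by filter_upwards [hdual₁] with ξ hξ; rw [hξ])
  -- the integrals against the sums vanish
  have hsum0 : ∀ (G : Fin (m + 1) → ℝ → ℝ), (∀ i, MemLp (G i) (ENNReal.ofReal q) lineMeasure) →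
      ∫ ξ, (h ξ - hstar ξ) * ((1 / ((m + 1 : ℕ) : ℝ)) * ∑ i : Fin (m + 1), G i (ξ i)) ∂μ
        = 0 := by
    intro G hG
    have hre : (fun ξ =>
        (h ξ - hstar ξ) * ((1 / ((m + 1 : ℕ) : ℝ)) * ∑ i : Fin (m + 1), G i (ξ i)))
        = fun ξ => (1 / ((m + 1 : ℕ) : ℝ))
            * ∑ i : Fin (m + 1), (h ξ - hstar ξ) * G i (ξ i) := by
      funext ξ
      simp only [Finset.mul_sum]
      exact Finset.sum_congr rfl fun i _ => by ring
    rw [hre, integral_const_mul,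
      integral_finset_sum _ fun i _ =>
        integrable_mul_memLp hp hq huL (memLp_comp_eval i (hG i))]
    have : ∀ i : Fin (m + 1), ∫ ξ, (h ξ - hstar ξ) * G i (ξ i) ∂μ = 0 := fun i =>
      key_integral_zero hp hq hhL hhsL hmarg i (hG i)
    simp [this]
  have hA0 : ∫ ξ, (h ξ - hstar ξ) * (Real.sign (h ξ) * |h ξ| ^ (p - 1)) ∂μ = 0 := by
    rw [integral_congr_ae (g := fun ξ =>
      (h ξ - hstar ξ) * ((1 / ((m + 1 : ℕ) : ℝ)) * ∑ i : Fin (m + 1), Ψ i (ξ i)))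
      (by filter_upwards [hdual₂] with ξ hξ; rw [hξ])]
    exact hsum0 Ψ hΨ
  have hB0 : ∫ ξ, (h ξ - hstar ξ) * (Real.sign (hstar ξ) * |hstar ξ| ^ (p - 1)) ∂μ = 0 := by
    rw [integral_congr_ae (g := fun ξ =>
      (h ξ - hstar ξ) * ((1 / ((m + 1 : ℕ) : ℝ)) * ∑ i : Fin (m + 1), Φ i (ξ i)))
      (by filter_upwards [hdual₁] with ξ hξ; rw [hξ])]
    exact hsum0 Φ hΦ
  -- the nonnegative function with zero integral
  set F : (Fin (m + 1) → ℝ) → ℝ := fun ξ =>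
    (h ξ - hstar ξ) * (Real.sign (h ξ) * |h ξ| ^ (p - 1))
      - (h ξ - hstar ξ) * (Real.sign (hstar ξ) * |hstar ξ| ^ (p - 1)) with hF
  have hFint : Integrable F μ := hintA.sub hintB
  have hFnonneg : 0 ≤ᵐ[μ] F := Filter.Eventually.of_forall fun ξ => by
    have := signPow_diff_nonneg hp (h ξ) (hstar ξ)
    simp only [hF, Pi.zero_apply]
    nlinarith
  have hF0 : ∫ ξ, F ξ ∂μ = 0 := by
    rw [hF]
    rw [integral_sub hintA hintB, hA0, hB0, sub_zero]
  have hFz : F =ᵐ[μ] 0 := (integral_eq_zero_iff_of_nonneg_ae hFnonneg hFint).1 hF0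
  filter_upwards [hFz] with ξ hξ
  refine signPow_diff_eq_zero hp (a := h ξ) (b := hstar ξ) ?_
  have hξ' : F ξ = 0 := hξ
  rw [hF] at hξ'
  linear_combination hξ'
end
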